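/- Let H be a complex Hilbert space and g : H →L[ℂ] H a self-adjoint unitary (g* = g and g ∘ g = id), regarded as the grading operator of the graded elementary C*-algebra K(H). Suppose σ is a Real structure on K(H) (a conjugate-linear *-algebra automorphism with σ ∘ σ = id) that commutes with the grading automorphism, i.e., σ(g ∘ T ∘ g) = g ∘ σ(T) ∘ g for every compact operator T. Then there exists an antiunitary J on H such that: (i) σ(T) = J ∘ T ∘ J⁻¹ for every compact operator T; (ii) J ∘ J = id or J ∘ J = −id; and (iii) J is homogeneous, i.e., J ∘ g = g ∘ J or J ∘ g = −(g ∘ J). -/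

import Mathlib

/-!
Fix a unit vector `e`. The operator `P = σ(|e⟩⟨e|)` is a nonzero idempotent, so it fixes a unit
vector `f`, and `J x := σ(|x⟩⟨e|) f` is a conjugate-linear bijection with `⟪J x, J y⟫ = ⟪y, x⟫`
and `σ(T) ∘ J = J ∘ T`. If `J'` also implements `σ`, then `J' ∘ J⁻¹` commutes with every
rank-one operator and is therefore a scalar. Since `σ` is involutive, `J ∘ J` commutes with
`K(H)`, so `J ∘ J = c`, and antiunitarity forces `c = ±1`. Since `σ` commutes with `Ad g`,
`g ∘ J ∘ g` also implements `σ`, so `g ∘ J ∘ g = μ J`, and `g ∘ g = 1` forces `μ = ±1`.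
-/

open scoped ComplexInnerProductSpace

/-- The `*`-algebra `K(H)` of compact operators on `H`, realized as the subtype of
continuous linear maps `H →L[ℂ] H` that are compact operators. -/
abbrev CompactOp (H : Type*) [NormedAddCommGroup H] [NormedSpace ℂ H] : Type _ :=
  {T : H →L[ℂ] H // IsCompactOperator T}

theorem IsIdempotentElem.exists_norm_eq_one_apply_eq_self {𝕜 E : Type*} [RCLike 𝕜]
    [NormedAddCommGroup E] [NormedSpace 𝕜 E] {P : E →L[𝕜] E} (hP : IsIdempotentElem P)
    (hP0 : P ≠ 0) : ∃ f, ‖f‖ = 1 ∧ P f = f := by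
  obtain ⟨x, hx⟩ : ∃ x, P x ≠ 0 := by
    by_contra! h
    exact hP0 (ContinuousLinearMap.ext h)
  refine ⟨(‖P x‖ : 𝕜)⁻¹ • P x, norm_smul_inv_norm hx, ?_⟩
  rw [map_smul, show P (P x) = P x from DFunLike.congr_fun hP.eq x]

namespace CompactOp

open ContinuousLinearMap

variable {H : Type*} [NormedAddCommGroup H] [InnerProductSpace ℂ H]

theorem isCompactOperator_rankOne (x y : H) :
    IsCompactOperator (InnerProductSpace.rankOne ℂ x y) :=
  (isCompactOperator_of_locallyCompactSpace_dom (innerSL ℂ y)).clm_comp (toSpanSingleton ℂ x)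

noncomputable def rankOne (x y : H) : CompactOp H :=
  ⟨InnerProductSpace.rankOne ℂ x y, isCompactOperator_rankOne x y⟩

@[simp] theorem rankOne_apply (x y z : H) : (rankOne x y).1 z = ⟪y, z⟫ • x := rfl

theorem exists_eq_smul_of_commute {U : H → H}
    (hU : ∀ (T : CompactOp H) x, U (T.1 x) = T.1 (U x)) : ∃ c : ℂ, ∀ x, U x = c • x := by
  obtain hH | hH := subsingleton_or_nontrivial H
  · exact ⟨0, fun _ => Subsingleton.elim _ _⟩
  obtain ⟨e, he⟩ := exists_norm_eq H zero_le_one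
  refine ⟨⟪e, U e⟫, fun x => ?_⟩
  have hx : (rankOne x e).1 e = x := by simp [inner_self_eq_norm_sq_to_K, he]
  conv_lhs => rw [← hx]
  rw [hU, rankOne_apply]

def Implements (σ : CompactOp H → CompactOp H) (J : H → H) : Prop :=
  ∀ (T : CompactOp H) (x : H), (σ T).1 (J x) = J (T.1 x)

namespace Implements

variable {σ : CompactOp H → CompactOp H} {J : H → H}

theorem apply_eq (hJ : Implements σ J) {Jinv : H → H} (hright : Function.RightInverse Jinv J)
    (T : CompactOp H) (x : H) : (σ T).1 x = J (T.1 (Jinv x)) := by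
  rw [← hJ, hright x]

theorem apply_map (hJ : Implements σ J) (hσ : Function.Involutive σ) (T : CompactOp H) (x : H) :
    J ((σ T).1 x) = T.1 (J x) := by
  rw [← hJ, hσ T]

theorem exists_apply_apply_eq_smul (hJ : Implements σ J) (hσ : Function.Involutive σ) :
    ∃ c : ℂ, ∀ x, J (J x) = c • x :=
  exists_eq_smul_of_commute fun T x => by rw [← hJ, hJ.apply_map hσ]

theorem exists_eq_smul (hJ : Implements σ J) (hσ : Function.Involutive σ) {J' : H → H}
    (hJ' : Implements σ J') {Jinv : H → H} (hleft : Function.LeftInverse Jinv J)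
    (hright : Function.RightInverse Jinv J) : ∃ μ : ℂ, ∀ x, J' x = μ • J x := by
  obtain ⟨μ, hμ⟩ := exists_eq_smul_of_commute (U := fun y => J' (Jinv y)) fun T y => by
    rw [← hσ T, hJ.apply_eq hright, hleft, hJ']
  exact ⟨μ, fun x => by rw [← hμ, hleft]⟩

theorem conj_grading (hJ : Implements σ J) {g : H →L[ℂ] H} (hg : ∀ x, g (g x) = x)
    (hgrading : ∀ (T : CompactOp H) (h : IsCompactOperator (g.comp (T.1.comp g))),
      (σ ⟨g.comp (T.1.comp g), h⟩).1 = g.comp ((σ T).1.comp g)) :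
    Implements σ (fun x => g (J (g x))) := fun T x => by
  have hc : IsCompactOperator (g.comp (T.1.comp g)) := (T.2.comp_clm g).clm_comp g
  have h := hJ ⟨_, hc⟩ (g x)
  rw [hgrading T hc] at h
  simpa only [comp_apply, hg] using congrArg g h

theorem apply_apply_eq_self_or_neg [Nontrivial H] {J : H →ₗ⋆[ℂ] H} (hJ : Implements σ J)
    (hσ : Function.Involutive σ) (hinner : ∀ x y, ⟪J x, J y⟫ = ⟪y, x⟫) :
    (∀ x, J (J x) = x) ∨ (∀ x, J (J x) = -x) := by
  obtain ⟨c, hc⟩ := hJ.exists_apply_apply_eq_smul hσ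
  obtain ⟨x, hx⟩ := exists_ne (0 : H)
  have hJx : J x ≠ 0 := fun h =>
    hx (inner_self_eq_zero.mp (by rw [← hinner, h, inner_zero_left]))
  have hreal : starRingEnd ℂ c = c := smul_left_injective ℂ hJx <|
    show starRingEnd ℂ c • J x = c • J x by rw [← map_smulₛₗ, ← hc x, hc (J x)]
  have hsq : c * c = 1 := by
    have h := hinner (J x) (J x)
    rw [hinner x x, hc, inner_smul_left, inner_smul_right, hreal, ← mul_assoc] at h
    exact mul_right_cancel₀ (inner_self_ne_zero.mpr hx) (h.trans (one_mul _).symm)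
  rcases mul_self_eq_one_iff.mp hsq with rfl | rfl
  · exact Or.inl fun x => by simpa using hc x
  · exact Or.inr fun x => by simpa using hc x

theorem grading_comm_or_anticomm [Nontrivial H] {J : H →ₗ⋆[ℂ] H} (hJ : Implements σ J)
    (hσ : Function.Involutive σ) {Jinv : H → H} (hleft : Function.LeftInverse Jinv J)
    (hright : Function.RightInverse Jinv J) {g : H →L[ℂ] H} (hg : ∀ x, g (g x) = x)
    (hgrading : ∀ (T : CompactOp H) (h : IsCompactOperator (g.comp (T.1.comp g))),
      (σ ⟨g.comp (T.1.comp g), h⟩).1 = g.comp ((σ T).1.comp g)) :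
    (∀ x, J (g x) = g (J x)) ∨ (∀ x, J (g x) = -(g (J x))) := by
  obtain ⟨μ, hμ⟩ := hJ.exists_eq_smul hσ (hJ.conj_grading hg hgrading) hleft hright
  have hJg : ∀ x, J (g x) = μ • g (J x) := fun x => by rw [← g.map_smul, ← hμ, hg]
  obtain ⟨x, hx⟩ := exists_ne (0 : H)
  have hJx : J x ≠ 0 := fun h => hx (hleft.injective (h.trans (map_zero J).symm))
  have hsq : μ * μ = 1 := smul_left_injective ℂ hJx <|
    show (μ * μ) • J x = (1 : ℂ) • J x from calc
      (μ * μ) • J x = μ • g (μ • g (J x)) := by rw [g.map_smul, smul_smul, hg]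
      _ = (1 : ℂ) • J x := by rw [← hJg, ← hJg, hg, one_smul]
  rcases mul_self_eq_one_iff.mp hsq with rfl | rfl
  · exact Or.inl fun x => by simpa using hJg x
  · exact Or.inr fun x => by simpa using hJg x

end Implements

section RealStructure

variable [CompleteSpace H]

structure IsRealStructure (σ : CompactOp H → CompactOp H) : Prop where
  map_add : ∀ (T S : CompactOp H) (h : IsCompactOperator (T.1 + S.1)),
    (σ ⟨T.1 + S.1, h⟩).1 = (σ T).1 + (σ S).1
  map_smul : ∀ (c : ℂ) (T : CompactOp H) (h : IsCompactOperator (c • T.1)),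
    (σ ⟨c • T.1, h⟩).1 = (starRingEnd ℂ c) • (σ T).1
  map_comp : ∀ (T S : CompactOp H) (h : IsCompactOperator (T.1.comp S.1)),
    (σ ⟨T.1.comp S.1, h⟩).1 = (σ T).1.comp (σ S).1
  map_adjoint : ∀ (T : CompactOp H) (h : IsCompactOperator (adjoint T.1)),
    (σ ⟨adjoint T.1, h⟩).1 = adjoint (σ T).1
  involutive : Function.Involutive σ

namespace IsRealStructure

variable {σ : CompactOp H → CompactOp H} (hσ : IsRealStructure σ)
include hσ

theorem map_rankOne_add_left (x x' y : H) :
    (σ (rankOne (x + x') y)).1 = (σ (rankOne x y)).1 + (σ (rankOne x' y)).1 := by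
  rw [← hσ.map_add _ _ ((isCompactOperator_rankOne x y).add (isCompactOperator_rankOne x' y))]
  congr 2
  exact Subtype.ext (by simp [rankOne])

theorem map_rankOne_smul_left (c : ℂ) (x y : H) :
    (σ (rankOne (c • x) y)).1 = starRingEnd ℂ c • (σ (rankOne x y)).1 := by
  rw [← hσ.map_smul c _ ((isCompactOperator_rankOne x y).smul c)]
  congr 2
  exact Subtype.ext (by simp [rankOne])

theorem map_rankOne_apply_left (T : CompactOp H) (x y : H) :
    (σ (rankOne (T.1 x) y)).1 = (σ T).1.comp (σ (rankOne x y)).1 := by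
  rw [← hσ.map_comp _ _ (T.2.comp_clm _)]
  congr 2
  exact Subtype.ext (by simp [rankOne, InnerProductSpace.comp_rankOne])

theorem adjoint_map_rankOne (x y : H) :
    adjoint (σ (rankOne x y)).1 = (σ (rankOne y x)).1 := by
  rw [← hσ.map_adjoint _ (by simpa [rankOne] using isCompactOperator_rankOne y x)]
  congr 2
  exact Subtype.ext (by simp [rankOne])

theorem map_rankOne_comp_map_rankOne (x y u v : H) :
    (σ (rankOne x y)).1.comp (σ (rankOne u v)).1 =
      starRingEnd ℂ ⟪y, u⟫ • (σ (rankOne x v)).1 := by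
  rw [← hσ.map_smul _ _ ((isCompactOperator_rankOne x v).smul _),
    ← hσ.map_comp (rankOne x y) (rankOne u v) ((isCompactOperator_rankOne x y).comp_clm _)]
  congr 2
  exact Subtype.ext (by simp [rankOne, InnerProductSpace.rankOne_comp_rankOne])

theorem map_rankOne_ne_zero {x y : H} (hx : x ≠ 0) (hy : y ≠ 0) :
    (σ (rankOne x y)).1 ≠ 0 := by
  intro h
  have h0 : σ (rankOne x y) = σ (rankOne 0 y) := Subtype.ext <| by
    rw [h, ← zero_smul ℂ x, hσ.map_rankOne_smul_left]
    simp
  have h1 := congrArg Subtype.val (hσ.involutive.injective h0)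
  simp [rankOne, hx, hy] at h1

noncomputable def implementer (e f : H) : H →ₗ⋆[ℂ] H where
  toFun x := (σ (rankOne x e)).1 f
  map_add' x x' := by simp only [hσ.map_rankOne_add_left, add_apply]
  map_smul' c x := by simp only [hσ.map_rankOne_smul_left, smul_apply]

theorem implementer_apply (e f x : H) : hσ.implementer e f x = (σ (rankOne x e)).1 f := rfl

theorem implements_implementer (e f : H) : Implements σ (hσ.implementer e f) := fun T x => by
  simp only [implementer_apply, hσ.map_rankOne_apply_left, comp_apply]

section Implementer

variable {e f : H} (hf : (σ (rankOne e e)).1 f = f) (hf1 : ‖f‖ = 1)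
include hf hf1

theorem inner_implementer (x y : H) :
    ⟪hσ.implementer e f x, hσ.implementer e f y⟫ = ⟪y, x⟫ := by
  rw [implementer_apply, implementer_apply, ← adjoint_inner_right, hσ.adjoint_map_rankOne,
    ← comp_apply, hσ.map_rankOne_comp_map_rankOne, smul_apply, hf, inner_smul_right,
    inner_self_eq_norm_sq_to_K, hf1]
  simp

theorem implementer_bijective : Function.Bijective (hσ.implementer e f) := by
  refine ⟨fun x y hxy => ?_, fun y => ⟨(σ (rankOne y f)).1 e, ?_⟩⟩
  · have h := hσ.inner_implementer hf hf1 (x - y) (x - y)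
    rwa [map_sub, hxy, sub_self, inner_zero_left, eq_comm, inner_self_eq_zero, sub_eq_zero] at h
  · rw [(hσ.implements_implementer e f).apply_map hσ.involutive, implementer_apply, hf,
      rankOne_apply, inner_self_eq_norm_sq_to_K, hf1]
    simp

end Implementer

theorem exists_antiunitary_implements [Nontrivial H] :
    ∃ J : H →ₗ⋆[ℂ] H,
      (∀ x y, ⟪J x, J y⟫ = ⟪y, x⟫) ∧ Function.Bijective J ∧ Implements σ J := by
  obtain ⟨e, he⟩ := exists_norm_eq H zero_le_one
  have he0 : e ≠ 0 := norm_ne_zero_iff.mp (he ▸ one_ne_zero)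
  have hP : IsIdempotentElem (σ (rankOne e e)).1 := by
    rw [IsIdempotentElem, mul_def, hσ.map_rankOne_comp_map_rankOne, inner_self_eq_norm_sq_to_K,
      he]
    simp
  obtain ⟨f, hf1, hf⟩ := hP.exists_norm_eq_one_apply_eq_self (hσ.map_rankOne_ne_zero he0 he0)
  exact ⟨hσ.implementer e f, hσ.inner_implementer hf hf1, hσ.implementer_bijective hf hf1,
    hσ.implements_implementer e f⟩

end IsRealStructure

end RealStructure

end CompactOp

theorem stmt_7_general {H : Type*} [NormedAddCommGroup H] [InnerProductSpace ℂ H] [CompleteSpace H]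
    (g : H →L[ℂ] H)
    (hg_unitary : g.comp g = ContinuousLinearMap.id ℂ H)
    (σ : CompactOp H → CompactOp H)
    (haddσ : ∀ (T S : CompactOp H) (h : IsCompactOperator (T.1 + S.1)),
      (σ ⟨T.1 + S.1, h⟩).1 = (σ T).1 + (σ S).1)
    (hsmulσ : ∀ (c : ℂ) (T : CompactOp H) (h : IsCompactOperator (c • T.1)),
      (σ ⟨c • T.1, h⟩).1 = (starRingEnd ℂ c) • (σ T).1)
    (hmulσ : ∀ (T S : CompactOp H) (h : IsCompactOperator (T.1.comp S.1)),
      (σ ⟨T.1.comp S.1, h⟩).1 = (σ T).1.comp (σ S).1)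
    (hstarσ : ∀ (T : CompactOp H) (h : IsCompactOperator (ContinuousLinearMap.adjoint T.1)),
      (σ ⟨ContinuousLinearMap.adjoint T.1, h⟩).1 = ContinuousLinearMap.adjoint (σ T).1)
    (hinvol : ∀ T : CompactOp H, σ (σ T) = T)
    (hgrading : ∀ (T : CompactOp H) (h : IsCompactOperator (g.comp (T.1.comp g))),
      (σ ⟨g.comp (T.1.comp g), h⟩).1 = g.comp ((σ T).1.comp g)) :
    ∃ J Jinv : H → H,
      Function.LeftInverse Jinv J ∧ Function.RightInverse Jinv J ∧
      (∀ x y : H, J (x + y) = J x + J y) ∧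
      (∀ (c : ℂ) (x : H), J (c • x) = (starRingEnd ℂ c) • J x) ∧
      (∀ x y : H, ⟪J x, J y⟫ = ⟪y, x⟫) ∧
      (∀ (T : CompactOp H) (x : H), (σ T).1 x = J (T.1 (Jinv x))) ∧
      ((∀ x : H, J (J x) = x) ∨ (∀ x : H, J (J x) = -x)) ∧
      ((∀ x : H, J (g x) = g (J x)) ∨ (∀ x : H, J (g x) = -(g (J x)))) := by
  obtain hH | hH := subsingleton_or_nontrivial H
  · exact ⟨id, id, fun _ => rfl, fun _ => rfl, by simp [Subsingleton.elim _ (0 : H)]⟩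
  have hσ : CompactOp.IsRealStructure σ := ⟨haddσ, hsmulσ, hmulσ, hstarσ, hinvol⟩
  have hg : ∀ x, g (g x) = x := fun x => DFunLike.congr_fun hg_unitary x
  obtain ⟨J, hJinner, hJbij, hJσ⟩ := hσ.exists_antiunitary_implements
  obtain ⟨Jinv, hleft, hright⟩ := Function.bijective_iff_has_inverse.mp hJbij
  exact ⟨J, Jinv, hleft, hright, map_add J, map_smulₛₗ J, hJinner, hJσ.apply_eq hright,
    hJσ.apply_apply_eq_self_or_neg hinvol hJinner,
    hJσ.grading_comm_or_anticomm hinvol hleft hright hg hgrading⟩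

/-- Let `g` be a self-adjoint unitary on a complex Hilbert space `H`,
the grading operator of the graded elementary C*-algebra `K(H)`, and let `σ` be a Real
structure on `K(H)` (a conjugate-linear `*`-automorphism with `σ ∘ σ = id`) commuting
with the grading automorphism `Ad_g`.  Then `σ` is implemented by an antiunitary `J`
with `J ∘ J = ± id` which is homogeneous: `J ∘ g = ± g ∘ J`. -/
theorem stmt_7 {H : Type*} [NormedAddCommGroup H] [InnerProductSpace ℂ H] [CompleteSpace H]
    (g : H →L[ℂ] H)
    (hg_sa : ContinuousLinearMap.adjoint g = g)
    (hg_unitary : g.comp g = ContinuousLinearMap.id ℂ H)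
    (σ : CompactOp H → CompactOp H)
    (hbij : Function.Bijective σ)
    (haddσ : ∀ (T S : CompactOp H) (h : IsCompactOperator (T.1 + S.1)),
      (σ ⟨T.1 + S.1, h⟩).1 = (σ T).1 + (σ S).1)
    (hsmulσ : ∀ (c : ℂ) (T : CompactOp H) (h : IsCompactOperator (c • T.1)),
      (σ ⟨c • T.1, h⟩).1 = (starRingEnd ℂ c) • (σ T).1)
    (hmulσ : ∀ (T S : CompactOp H) (h : IsCompactOperator (T.1.comp S.1)),
      (σ ⟨T.1.comp S.1, h⟩).1 = (σ T).1.comp (σ S).1)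
    (hstarσ : ∀ (T : CompactOp H) (h : IsCompactOperator (ContinuousLinearMap.adjoint T.1)),
      (σ ⟨ContinuousLinearMap.adjoint T.1, h⟩).1 = ContinuousLinearMap.adjoint (σ T).1)
    (hinvol : ∀ T : CompactOp H, σ (σ T) = T)
    (hgrading : ∀ (T : CompactOp H) (h : IsCompactOperator (g.comp (T.1.comp g))),
      (σ ⟨g.comp (T.1.comp g), h⟩).1 = g.comp ((σ T).1.comp g)) :
    ∃ J Jinv : H → H,
      Function.LeftInverse Jinv J ∧ Function.RightInverse Jinv J ∧
      (∀ x y : H, J (x + y) = J x + J y) ∧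
      (∀ (c : ℂ) (x : H), J (c • x) = (starRingEnd ℂ c) • J x) ∧
      (∀ x y : H, ⟪J x, J y⟫ = ⟪y, x⟫) ∧
      (∀ (T : CompactOp H) (x : H), (σ T).1 x = J (T.1 (Jinv x))) ∧
      ((∀ x : H, J (J x) = x) ∨ (∀ x : H, J (J x) = -x)) ∧
      ((∀ x : H, J (g x) = g (J x)) ∨ (∀ x : H, J (g x) = -(g (J x)))) :=
  stmt_7_general g hg_unitary σ haddσ hsmulσ hmulσ hstarσ hinvol hgrading
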